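/- Let M : l²(ℤ) → l²(ℤ) be a bounded linear operator given by a bi-infinite matrix (m_{j'j})_{j',j∈ℤ}, i.e. (Mx)_{j'} = Σ_j m_{j'j} x_j. Let δ > 0 and let w : [0,∞) → [0,∞) satisfy w(x) = o(x^{−1−δ}) as x → ∞. If there exists 0 < λ < 1 such that |m_{j'j}| < w(−λ|j'| + |j|) for all j', j ∈ ℤ with −λ|j'| + |j| > 0, then M has no bounded right inverse, i.e. there is no bounded linear operator R : l²(ℤ) → l²(ℤ) with M∘R = Id. -/

import Mathlib

/-!
If `M R = 1` then `‖y‖ ≤ ‖R‖ ‖M* y‖`, so it suffices to find nonzero `y` with `‖M* y‖ / ‖y‖`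
arbitrarily small. Take `y` supported on `[-N, N]` and orthogonal to the `2N - 1` columns `M e_j`,
`|j| < N`: there are `2N + 1` free coordinates. The remaining coordinates
`(M* y)_j = ⟪M e_j, y⟫`, `|j| ≥ N`, only involve entries `m i j` with `|i| ≤ N ≤ |j|`, for which
`-λ|i| + |j| ≥ (1 - λ)|j|`; hence `|m i j| ≲ |j|^(-1-δ)` and
`‖M* y‖² ≤ ‖y‖² Σ_{|j| ≥ N} Σ_{|i| ≤ N} |m i j|² ≲ ‖y‖² Σ_{|j| ≥ N} |j|^(-1-2δ)`, a tail of a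
convergent series.
-/

open Filter Topology
open scoped ComplexConjugate InnerProductSpace

namespace ContinuousLinearMap

variable {𝕜 E : Type*} [RCLike 𝕜] [NormedAddCommGroup E] [InnerProductSpace 𝕜 E] [CompleteSpace E]

theorem norm_le_opNorm_mul_norm_adjoint_apply {M R : E →L[𝕜] E}
    (hMR : M.comp R = ContinuousLinearMap.id 𝕜 E) (y : E) : ‖y‖ ≤ ‖R‖ * ‖adjoint M y‖ := by
  have hy : ‖y‖ * ‖y‖ ≤ ‖R‖ * ‖adjoint M y‖ * ‖y‖ :=
    calc ‖y‖ * ‖y‖ = RCLike.re ⟪adjoint M y, R y⟫_𝕜 := by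
          rw [adjoint_inner_left, ← comp_apply, hMR, id_apply, inner_self_eq_norm_mul_norm]
      _ ≤ ‖adjoint M y‖ * ‖R y‖ := (RCLike.re_le_norm _).trans (norm_inner_le_norm _ _)
      _ ≤ ‖R‖ * ‖adjoint M y‖ * ‖y‖ := by
          rw [mul_comm ‖R‖, mul_assoc]; gcongr; exact R.le_opNorm y
  rcases eq_or_ne y 0 with rfl | hy0
  · simp
  · exact le_of_mul_le_mul_right hy (norm_pos_iff.mpr hy0)

theorem not_exists_comp_eq_id_of_forall_exists_norm_adjoint_sq_le {M : E →L[𝕜] E}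
    (hM : ∀ ε > 0, ∃ y ≠ 0, ‖adjoint M y‖ ^ 2 ≤ ε * ‖y‖ ^ 2) :
    ¬ ∃ R : E →L[𝕜] E, M.comp R = ContinuousLinearMap.id 𝕜 E := by
  rintro ⟨R, hMR⟩
  obtain ⟨y, hy0, hy⟩ := hM (1 / (‖R‖ ^ 2 + 1)) (by positivity)
  have hy2 : 0 < ‖y‖ ^ 2 := by positivity
  refine lt_irrefl (‖y‖ ^ 2) ?_
  calc ‖y‖ ^ 2 ≤ (‖R‖ * ‖adjoint M y‖) ^ 2 := by
        gcongr; exact norm_le_opNorm_mul_norm_adjoint_apply hMR y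
    _ ≤ ‖R‖ ^ 2 * (1 / (‖R‖ ^ 2 + 1) * ‖y‖ ^ 2) := by rw [mul_pow]; gcongr
    _ = ‖R‖ ^ 2 / (‖R‖ ^ 2 + 1) * ‖y‖ ^ 2 := by ring
    _ < ‖y‖ ^ 2 := mul_lt_of_lt_one_left hy2 <| (div_lt_one (by positivity)).mpr (by linarith)

end ContinuousLinearMap

namespace lp

variable {ι 𝕜 : Type*} [RCLike 𝕜]

theorem norm_sq_eq_tsum (x : lp (fun _ : ι => 𝕜) 2) : ‖x‖ ^ 2 = ∑' i, ‖x i‖ ^ 2 := by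
  simpa only [ENNReal.toReal_ofNat, Real.rpow_two] using
    lp.norm_rpow_eq_tsum (p := 2) (by norm_num) x

theorem summable_norm_sq (x : lp (fun _ : ι => 𝕜) 2) : Summable fun i => ‖x i‖ ^ 2 := by
  simpa only [ENNReal.toReal_ofNat, Real.rpow_two] using
    (lp.memℓp x).summable (p := 2) (by norm_num)

theorem norm_sq_le_tsum_of_norm_apply_sq_le (x : lp (fun _ : ι => 𝕜) 2) {g : ι → ℝ}
    (hg : Summable g) (hx : ∀ i, ‖x i‖ ^ 2 ≤ g i) : ‖x‖ ^ 2 ≤ ∑' i, g i := by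
  rw [norm_sq_eq_tsum]
  exact (summable_norm_sq x).tsum_le_tsum hx hg

theorem sum_norm_sq_le_norm_sq (x : lp (fun _ : ι => 𝕜) 2) (s : Finset ι) :
    ∑ i ∈ s, ‖x i‖ ^ 2 ≤ ‖x‖ ^ 2 := by
  rw [norm_sq_eq_tsum]
  exact (summable_norm_sq x).sum_le_tsum s fun i _ => by positivity

variable [DecidableEq ι]

theorem exists_ne_zero_support_subset_apply_eq_zero
    (T : lp (fun _ : ι => 𝕜) 2 →L[𝕜] lp (fun _ : ι => 𝕜) 2) {I J : Finset ι}
    (hJI : J.card < I.card) :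
    ∃ y : lp (fun _ : ι => 𝕜) 2, y ≠ 0 ∧ (∀ i ∉ I, y i = 0) ∧ ∀ j ∈ J, T y j = 0 := by
  let extend : (I → 𝕜) →ₗ[𝕜] lp (fun _ : ι => 𝕜) 2 :=
    ∑ i : I, lp.lsingle 2 (i : ι) ∘ₗ LinearMap.proj i
  have extend_apply (v : I → 𝕜) (k : ι) : extend v k = if h : k ∈ I then v ⟨k, h⟩ else 0 := by
    simp only [extend, LinearMap.sum_apply, LinearMap.comp_apply, lp.lsingle_apply,
      LinearMap.proj_apply, lp.coeFn_sum, Finset.sum_apply, lp.single_apply]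
    split_ifs with h
    · rw [Finset.sum_eq_single ⟨k, h⟩ (fun i _ hi => Pi.single_eq_of_ne (by grind) _) (by simp)]
      simp
    · exact Finset.sum_eq_zero fun i _ => Pi.single_eq_of_ne (by grind) _
  let Φ : (I → 𝕜) →ₗ[𝕜] (J → 𝕜) :=
    LinearMap.pi fun j => lp.evalₗ _ 2 (j : ι) ∘ₗ T.toLinearMap ∘ₗ extend
  obtain ⟨v, hvΦ, hv0⟩ := Submodule.ne_bot_iff _ |>.mp <|
    LinearMap.ker_ne_bot_of_finrank_lt (f := Φ) (by simpa using hJI)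
  obtain ⟨i, hi⟩ := Function.ne_iff.mp hv0
  refine ⟨extend v, fun h => hi ?_, fun k hk => by simp [extend_apply, hk], fun j hj => ?_⟩
  · simpa [extend_apply] using congr($h i)
  · simpa [Φ] using congr_fun (LinearMap.mem_ker.mp hvΦ) ⟨j, hj⟩

theorem apply_single_one_of_forall_apply_eq_tsum
    {T : lp (fun _ : ι => 𝕜) 2 →L[𝕜] lp (fun _ : ι => 𝕜) 2} {m : ι → ι → 𝕜}
    (hT : ∀ x : lp (fun _ : ι => 𝕜) 2, ∀ i, T x i = ∑' j, m i j * x j) (i j : ι) :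
    T (lp.single 2 j 1) i = m i j := by
  rw [hT, tsum_eq_single j fun k hk => by simp [Pi.single_eq_of_ne hk]]
  simp

theorem adjoint_apply_eq_sum (T : lp (fun _ : ι => 𝕜) 2 →L[𝕜] lp (fun _ : ι => 𝕜) 2)
    {I : Finset ι} {y : lp (fun _ : ι => 𝕜) 2} (hy : ∀ i ∉ I, y i = 0) (j : ι) :
    ContinuousLinearMap.adjoint T y j = ∑ i ∈ I, conj (T (lp.single 2 j 1) i) * y i := by
  calc ContinuousLinearMap.adjoint T y j
      = ⟪lp.single 2 j (1 : 𝕜), ContinuousLinearMap.adjoint T y⟫_𝕜 := by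
        simp [lp.inner_single_left]
    _ = ∑' i, ⟪T (lp.single 2 j 1) i, y i⟫_𝕜 := by
        rw [ContinuousLinearMap.adjoint_inner_right, lp.inner_eq_tsum]
    _ = ∑ i ∈ I, conj (T (lp.single 2 j 1) i) * y i := by
        rw [tsum_eq_sum (s := I) fun i hi => by simp [hy i hi]]
        simp [RCLike.inner_apply, mul_comm]

theorem norm_adjoint_apply_sq_le (T : lp (fun _ : ι => 𝕜) 2 →L[𝕜] lp (fun _ : ι => 𝕜) 2)
    {I : Finset ι} {y : lp (fun _ : ι => 𝕜) 2} (hy : ∀ i ∉ I, y i = 0) (j : ι) :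
    ‖ContinuousLinearMap.adjoint T y j‖ ^ 2 ≤
      (∑ i ∈ I, ‖T (lp.single 2 j 1) i‖ ^ 2) * ‖y‖ ^ 2 :=
  calc ‖ContinuousLinearMap.adjoint T y j‖ ^ 2
      ≤ (∑ i ∈ I, ‖T (lp.single 2 j 1) i‖ * ‖y i‖) ^ 2 := by
        rw [adjoint_apply_eq_sum T hy]
        gcongr
        exact (norm_sum_le _ _).trans_eq (by simp)
    _ ≤ (∑ i ∈ I, ‖T (lp.single 2 j 1) i‖ ^ 2) * ∑ i ∈ I, ‖y i‖ ^ 2 :=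
        Finset.sum_mul_sq_le_sq_mul_sq _ _ _
    _ ≤ (∑ i ∈ I, ‖T (lp.single 2 j 1) i‖ ^ 2) * ‖y‖ ^ 2 := by
        gcongr; exact sum_norm_sq_le_norm_sq y I

end lp

theorem exists_forall_ge_le_rpow_of_tendsto_div_rpow {w : ℝ → ℝ} {s : ℝ}
    (hw : Tendsto (fun x => w x / x ^ s) atTop (𝓝 0)) :
    ∃ X > 0, ∀ x ≥ X, w x ≤ x ^ s := by
  obtain ⟨X, hX⟩ := eventually_atTop.mp <|
    (hw.eventually_lt_const one_pos).and (eventually_gt_atTop (0 : ℝ))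
  refine ⟨max X 1, by positivity, fun x hx => ?_⟩
  obtain ⟨hlt, hx0⟩ := hX x (le_of_max_le_left hx)
  exact ((div_lt_one (by positivity)).mp hlt).le

theorem tendsto_tsum_indicator_natAbs_ge_atTop_zero {F : ℤ → ℝ} (hF : Summable F) :
    Tendsto (fun N : ℕ => ∑' j, {j : ℤ | N ≤ j.natAbs}.indicator F j) atTop (𝓝 0) := by
  have key : ∀ j : ℤ, Tendsto (fun N : ℕ => {j : ℤ | N ≤ j.natAbs}.indicator F j) atTop (𝓝 0) :=
    fun j => tendsto_const_nhds.congr' <| (eventually_gt_atTop j.natAbs).mono fun N hN => by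
      simp [Set.indicator_of_notMem (show j ∉ {j : ℤ | N ≤ j.natAbs} by simpa using hN)]
  simpa using tendsto_tsum_of_dominated_convergence hF.abs key <|
    Eventually.of_forall fun N j => by
      simp only [Real.norm_eq_abs, Set.indicator, Set.mem_ofPred_eq]
      split_ifs <;> simp

section SlantedDecay

variable {m : ℤ → ℤ → ℂ} {w : ℝ → ℝ} {lam : ℝ}

theorem norm_le_rpow_of_slanted_decay
    (hm : ∀ j' j : ℤ, 0 < -lam * |(j' : ℝ)| + |(j : ℝ)| →
      ‖m j' j‖ < w (-lam * |(j' : ℝ)| + |(j : ℝ)|))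
    (hlam0 : 0 ≤ lam) {X s : ℝ} (hX0 : 0 < X) (hwX : ∀ x ≥ X, w x ≤ x ^ s) (hs : s ≤ 0)
    {i j : ℤ} (hij : |(i : ℝ)| ≤ |(j : ℝ)|) (hXj : X ≤ (1 - lam) * |(j : ℝ)|) :
    ‖m i j‖ ≤ ((1 - lam) * |(j : ℝ)|) ^ s := by
  have ht : (1 - lam) * |(j : ℝ)| ≤ -lam * |(i : ℝ)| + |(j : ℝ)| := by nlinarith
  calc ‖m i j‖ ≤ w (-lam * |(i : ℝ)| + |(j : ℝ)|) := (hm i j (by linarith)).le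
    _ ≤ (-lam * |(i : ℝ)| + |(j : ℝ)|) ^ s := hwX _ (hXj.trans ht)
    _ ≤ ((1 - lam) * |(j : ℝ)|) ^ s := Real.rpow_le_rpow_of_nonpos (by linarith) ht hs

theorem sum_norm_sq_le_of_slanted_decay
    (hm : ∀ j' j : ℤ, 0 < -lam * |(j' : ℝ)| + |(j : ℝ)| →
      ‖m j' j‖ < w (-lam * |(j' : ℝ)| + |(j : ℝ)|))
    (hlam0 : 0 ≤ lam) (hlam : lam < 1) {X s : ℝ} (hX0 : 0 < X) (hwX : ∀ x ≥ X, w x ≤ x ^ s)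
    (hs : s ≤ 0) {N : ℕ} (hN : 1 ≤ N) (hXN : X ≤ (1 - lam) * N) {j : ℤ} (hj : N ≤ j.natAbs) :
    ∑ i ∈ Finset.Icc (-N : ℤ) N, ‖m i j‖ ^ 2 ≤
      3 * (1 - lam) ^ (2 * s) * |(j : ℝ)| ^ (2 * s + 1) := by
  have hNj : (N : ℝ) ≤ |(j : ℝ)| := by
    rw [← Int.cast_abs, ← Nat.cast_natAbs]; exact_mod_cast hj
  have hN1 : (1 : ℝ) ≤ N := by exact_mod_cast hN
  have hj0 : 0 < |(j : ℝ)| := by linarith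
  have hentry : ∀ i ∈ Finset.Icc (-N : ℤ) N,
      ‖m i j‖ ^ 2 ≤ ((1 - lam) * |(j : ℝ)|) ^ (2 * s) := by
    intro i hi
    have hiN : |(i : ℝ)| ≤ N := by
      rw [← Int.cast_abs]; exact_mod_cast abs_le.mpr (Finset.mem_Icc.mp hi)
    have hXj : X ≤ (1 - lam) * |(j : ℝ)| := hXN.trans (by gcongr)
    calc ‖m i j‖ ^ 2 ≤ (((1 - lam) * |(j : ℝ)|) ^ s) ^ 2 := by
          gcongr; exact norm_le_rpow_of_slanted_decay hm hlam0 hX0 hwX hs (hiN.trans hNj) hXj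
      _ = ((1 - lam) * |(j : ℝ)|) ^ (2 * s) := by
          rw [← Real.rpow_natCast, ← Real.rpow_mul (by nlinarith), Nat.cast_ofNat, mul_comm s]
  calc ∑ i ∈ Finset.Icc (-N : ℤ) N, ‖m i j‖ ^ 2
      ≤ (2 * N + 1 : ℕ) * ((1 - lam) * |(j : ℝ)|) ^ (2 * s) := by
        have hcard : (Finset.Icc (-N : ℤ) N).card = 2 * N + 1 := by rw [Int.card_Icc]; omega
        simpa [hcard] using Finset.sum_le_card_nsmul _ _ _ hentry
    _ ≤ 3 * |(j : ℝ)| * ((1 - lam) ^ (2 * s) * |(j : ℝ)| ^ (2 * s)) := by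
        rw [Real.mul_rpow (by linarith) hj0.le]; push_cast; gcongr; linarith
    _ = 3 * (1 - lam) ^ (2 * s) * |(j : ℝ)| ^ (2 * s + 1) := by
        rw [Real.rpow_add_one hj0.ne']; ring

theorem exists_norm_adjoint_sq_le_of_slanted_decay
    (M : lp (fun _ : ℤ => ℂ) 2 →L[ℂ] lp (fun _ : ℤ => ℂ) 2)
    (hM : ∀ x : lp (fun _ : ℤ => ℂ) 2, ∀ j' : ℤ, M x j' = ∑' j : ℤ, m j' j * x j)
    {δ : ℝ} (hδ : 0 < δ) (hw : Tendsto (fun x : ℝ => w x / x ^ (-1 - δ)) atTop (𝓝 0))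
    (hlam0 : 0 ≤ lam) (hlam : lam < 1)
    (hm : ∀ j' j : ℤ, 0 < -lam * |(j' : ℝ)| + |(j : ℝ)| →
      ‖m j' j‖ < w (-lam * |(j' : ℝ)| + |(j : ℝ)|))
    {η : ℝ} (hη : 0 < η) :
    ∃ y ≠ 0, ‖ContinuousLinearMap.adjoint M y‖ ^ 2 ≤ η * ‖y‖ ^ 2 := by
  obtain ⟨X, hX0, hwX⟩ := exists_forall_ge_le_rpow_of_tendsto_div_rpow hw
  set F : ℤ → ℝ := fun j => 3 * (1 - lam) ^ (2 * (-1 - δ)) * |(j : ℝ)| ^ (2 * (-1 - δ) + 1)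
  have hF : Summable F :=
    ((Real.summable_abs_int_rpow (b := 1 + 2 * δ) (by linarith)).mul_left
      (3 * (1 - lam) ^ (2 * (-1 - δ)))).congr fun j => by simp only [F]; ring_nf
  have hNX : Tendsto (fun N : ℕ => (1 - lam) * N) atTop atTop :=
    tendsto_natCast_atTop_atTop.const_mul_atTop (by linarith)
  obtain ⟨N, hN, hXN, htail⟩ := ((eventually_ge_atTop 1).and ((hNX.eventually_ge_atTop X).and
    ((tendsto_tsum_indicator_natAbs_ge_atTop_zero hF).eventually (eventually_le_nhds hη)))).exists
  have hJI : (Finset.Ioo (-N : ℤ) N).card < (Finset.Icc (-N : ℤ) N).card := by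
    rw [Int.card_Icc, Int.card_Ioo]; omega
  obtain ⟨y, hy0, hyI, hyJ⟩ :=
    lp.exists_ne_zero_support_subset_apply_eq_zero (ContinuousLinearMap.adjoint M) hJI
  have hpt : ∀ j, ‖ContinuousLinearMap.adjoint M y j‖ ^ 2 ≤
      {j : ℤ | N ≤ j.natAbs}.indicator F j * ‖y‖ ^ 2 := by
    intro j
    by_cases hj : N ≤ j.natAbs
    · rw [Set.indicator_of_mem (show j ∈ {j : ℤ | N ≤ j.natAbs} from hj)]
      refine (lp.norm_adjoint_apply_sq_le M hyI j).trans ?_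
      simp only [lp.apply_single_one_of_forall_apply_eq_tsum hM]
      gcongr
      exact sum_norm_sq_le_of_slanted_decay hm hlam0 hlam hX0 hwX (by linarith) hN hXN hj
    · rw [hyJ j (by simp only [Finset.mem_Ioo]; omega)]
      simp [Set.indicator_of_notMem (show j ∉ {j : ℤ | N ≤ j.natAbs} from hj)]
  refine ⟨y, hy0, ?_⟩
  calc ‖ContinuousLinearMap.adjoint M y‖ ^ 2
      ≤ ∑' j, {j : ℤ | N ≤ j.natAbs}.indicator F j * ‖y‖ ^ 2 :=
        lp.norm_sq_le_tsum_of_norm_apply_sq_le _ ((hF.indicator _).mul_right _) hpt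
    _ ≤ η * ‖y‖ ^ 2 := by rw [tsum_mul_right]; gcongr

end SlantedDecay

theorem no_bounded_right_inverse_of_slanted_decay_l2_int_general
    (m : ℤ → ℤ → ℂ)
    (M : lp (fun _ : ℤ => ℂ) 2 →L[ℂ] lp (fun _ : ℤ => ℂ) 2)
    (hM : ∀ x : lp (fun _ : ℤ => ℂ) 2, ∀ j' : ℤ, M x j' = ∑' j : ℤ, m j' j * x j)
    (δ : ℝ) (hδ : 0 < δ)
    (w : ℝ → ℝ)
    (hw : Tendsto (fun x : ℝ => w x / x ^ (-1 - δ)) atTop (nhds 0))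
    (lam : ℝ) (hlam0 : 0 < lam) (hlam : lam < 1)
    (hm : ∀ j' j : ℤ, 0 < -lam * |(j' : ℝ)| + |(j : ℝ)| →
      ‖m j' j‖ < w (-lam * |(j' : ℝ)| + |(j : ℝ)|)) :
    ¬ ∃ R : lp (fun _ : ℤ => ℂ) 2 →L[ℂ] lp (fun _ : ℤ => ℂ) 2,
      M.comp R = ContinuousLinearMap.id ℂ (lp (fun _ : ℤ => ℂ) 2) :=
  ContinuousLinearMap.not_exists_comp_eq_id_of_forall_exists_norm_adjoint_sq_le fun _ hη =>
    exists_norm_adjoint_sq_le_of_slanted_decay M hM hδ hw hlam0.le hlam hm hη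

/-- A bounded operator on `l²(ℤ)` given by a bi-infinite matrix whose
entries decay like `w(-λ|j'| + |j|)` above the slanted diagonal `λ|j'| = |j|` (with slope
`0 < λ < 1` and `w(x) = o(x^{-1-δ})`) has no bounded right inverse. -/
theorem no_bounded_right_inverse_of_slanted_decay_l2_int
    (m : ℤ → ℤ → ℂ)
    (M : lp (fun _ : ℤ => ℂ) 2 →L[ℂ] lp (fun _ : ℤ => ℂ) 2)
    (hM : ∀ x : lp (fun _ : ℤ => ℂ) 2, ∀ j' : ℤ, M x j' = ∑' j : ℤ, m j' j * x j)
    (δ : ℝ) (hδ : 0 < δ)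
    (w : ℝ → ℝ) (hw0 : ∀ x : ℝ, 0 ≤ x → 0 ≤ w x)
    (hw : Tendsto (fun x : ℝ => w x / x ^ (-1 - δ)) atTop (nhds 0))
    (lam : ℝ) (hlam0 : 0 < lam) (hlam : lam < 1)
    (hm : ∀ j' j : ℤ, 0 < -lam * |(j' : ℝ)| + |(j : ℝ)| →
      ‖m j' j‖ < w (-lam * |(j' : ℝ)| + |(j : ℝ)|)) :
    ¬ ∃ R : lp (fun _ : ℤ => ℂ) 2 →L[ℂ] lp (fun _ : ℤ => ℂ) 2,
      M.comp R = ContinuousLinearMap.id ℂ (lp (fun _ : ℤ => ℂ) 2) :=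
  no_bounded_right_inverse_of_slanted_decay_l2_int_general m M hM δ hδ w hw lam hlam0 hlam hm
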